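/- Let g be C² on ℝ, bounded away from 0 on [0,1], with bounded second derivative, and let G(x) = ∫₀^x g. Then for u ∈ [α, 1−α] with α > 0 small, ∫_{u−α}^{u+α} 1/(G(x+α) − G(x−α)) dx = 1/g(u) + O(α²), i.e. there is a constant C (depending only on bounds on g, g', g'') such that |∫_{u−α}^{u+α} dx/(G(x+α)−G(x−α)) − 1/g(u)| ≤ Cα² for all sufficiently small α > 0. -/

import Mathlib

open Set intervalIntegral
open MeasureTheory (volume)

/-!
Writing `G (x + α) - G (x - α) = ∫_{x-α}^{x+α} g`, the symmetric window kills the linear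
Taylor term, so the window integral is `2α g(x) + O(α³)`; as it is also at least `2αl`, its
reciprocal is `1 / (2α g(x)) + O(α)`, uniformly in `x`. Integrating over `[u - α, u + α]` turns
the left-hand side into the mean of `1/g` over that interval up to `O(α²)`, and the same symmetric
window argument, applied to `1/g` (whose second-order Taylor remainder is bounded in terms of
`l`, `sup |g'|` and `B`), shows this mean is `1/g(u) + O(α²)`.
-/

lemma abs_sub_sub_deriv_mul_le {g : ℝ → ℝ} (hg : Differentiable ℝ g)
    (hg' : Differentiable ℝ (deriv g)) {B : ℝ} (hB : ∀ t, |deriv (deriv g) t| ≤ B)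
    (x y : ℝ) :
    |g y - g x - deriv g x * (y - x)| ≤ B * (y - x) ^ 2 := by
  have hlip : ∀ t, |deriv g t - deriv g x| ≤ B * |t - x| := fun t => by
    simpa only [Real.norm_eq_abs] using convex_univ.norm_image_sub_le_of_norm_deriv_le
      (fun z _ => hg' z) (fun z _ => hB z) (mem_univ x) (mem_univ t)
  have hφ : ∀ t ∈ uIcc x y, HasDerivWithinAt (fun v => g v - deriv g x * v)
      (deriv g t - deriv g x) (uIcc x y) t := fun t _ =>
    ((hg t).hasDerivAt.sub (((hasDerivAt_id' t).const_mul (deriv g x)).congr_deriv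
      (mul_one _))).hasDerivWithinAt
  have hbound : ∀ t ∈ uIcc x y, ‖deriv g t - deriv g x‖ ≤ B * |y - x| := fun t ht =>
    (hlip t).trans (mul_le_mul_of_nonneg_left (abs_sub_left_of_mem_uIcc ht)
      ((abs_nonneg _).trans (hB x)))
  have key := (convex_uIcc x y).norm_image_sub_le_of_norm_hasDerivWithin_le hφ hbound
    left_mem_uIcc right_mem_uIcc
  calc |g y - g x - deriv g x * (y - x)|
      = ‖(g y - deriv g x * y) - (g x - deriv g x * x)‖ := by rw [Real.norm_eq_abs]; ring_nf
    _ ≤ B * |y - x| * ‖y - x‖ := key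
    _ = B * (y - x) ^ 2 := by rw [Real.norm_eq_abs, mul_assoc, ← abs_mul, ← sq, abs_sq]

lemma abs_integral_sub_two_mul_le {f : ℝ → ℝ} {x α d K : ℝ} (hα : 0 ≤ α) (hK : 0 ≤ K)
    (hf : IntervalIntegrable f volume (x - α) (x + α))
    (htaylor : ∀ v ∈ Icc (x - α) (x + α), |f v - f x - d * (v - x)| ≤ K * (v - x) ^ 2) :
    |(∫ v in (x - α)..(x + α), f v) - 2 * α * f x| ≤ 2 * K * α ^ 3 := by
  have hslope : Continuous fun v => d * (v - x) := by fun_prop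
  have hlin_int : IntervalIntegrable (fun v => f x + d * (v - x)) volume (x - α) (x + α) :=
    intervalIntegrable_const.add (hslope.intervalIntegrable _ _)
  have hlin : ∫ v in (x - α)..(x + α), (f x + d * (v - x)) = 2 * α * f x := by
    rw [integral_add intervalIntegrable_const (hslope.intervalIntegrable _ _), integral_const_mul,
      integral_comp_sub_right (fun v => v), integral_id, integral_const, smul_eq_mul]
    ring
  have hrem : ∀ v ∈ uIoc (x - α) (x + α), ‖f v - (f x + d * (v - x))‖ ≤ K * α ^ 2 := by
    intro v hv
    rw [uIoc_of_le (by linarith)] at hv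
    have hvx : (v - x) ^ 2 ≤ α ^ 2 := sq_le_sq' (by linarith [hv.1]) (by linarith [hv.2])
    calc ‖f v - (f x + d * (v - x))‖ = |f v - f x - d * (v - x)| := by
          rw [Real.norm_eq_abs, sub_add_eq_sub_sub]
      _ ≤ K * (v - x) ^ 2 := htaylor v (Ioc_subset_Icc_self hv)
      _ ≤ K * α ^ 2 := mul_le_mul_of_nonneg_left hvx hK
  have key := norm_integral_le_of_norm_le_const hrem
  rw [integral_sub hf hlin_int, hlin, Real.norm_eq_abs,
    show x + α - (x - α) = 2 * α by ring, abs_of_nonneg (by positivity : (0 : ℝ) ≤ 2 * α)]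
    at key
  linarith

lemma abs_integral_inv_sub_integral_inv_le {D E : ℝ → ℝ} {a b m ε : ℝ} (hab : a ≤ b)
    (hm : 0 < m) (hD : ContinuousOn D (Icc a b)) (hE : ContinuousOn E (Icc a b))
    (hDm : ∀ x ∈ Icc a b, m ≤ D x) (hEm : ∀ x ∈ Icc a b, m ≤ E x)
    (hDE : ∀ x ∈ Icc a b, |D x - E x| ≤ ε) :
    |(∫ x in a..b, 1 / D x) - ∫ x in a..b, 1 / E x| ≤ (b - a) * (ε / m ^ 2) := by
  have hint : ∀ F : ℝ → ℝ, ContinuousOn F (Icc a b) → (∀ x ∈ Icc a b, m ≤ F x) →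
      IntervalIntegrable (fun x => 1 / F x) volume a b := fun F hF hFm =>
    ((continuousOn_const.div hF fun x hx => (hm.trans_le (hFm x hx)).ne').mono
      (uIcc_of_le hab).subset).intervalIntegrable
  have hpt : ∀ x ∈ uIoc a b, ‖1 / D x - 1 / E x‖ ≤ ε / m ^ 2 := by
    intro x hx
    rw [uIoc_of_le hab] at hx
    have hx := Ioc_subset_Icc_self hx
    have hDx := hm.trans_le (hDm x hx)
    have hEx := hm.trans_le (hEm x hx)
    rw [Real.norm_eq_abs, div_sub_div _ _ hDx.ne' hEx.ne', one_mul, mul_one, abs_div,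
      abs_sub_comm, abs_of_pos (mul_pos hDx hEx), sq]
    exact div_le_div₀ ((abs_nonneg _).trans (hDE x hx)) (hDE x hx) (by positivity)
      (mul_le_mul (hDm x hx) (hEm x hx) hm.le hDx.le)
  have key := norm_integral_le_of_norm_le_const hpt
  rwa [integral_sub (hint D hD hDm) (hint E hE hEm), Real.norm_eq_abs,
    abs_of_nonneg (by linarith : (0 : ℝ) ≤ b - a), mul_comm] at key

lemma abs_one_div_sub_one_div_sub_mul_le {a b d h l A B : ℝ} (hl : 0 < l) (ha : l ≤ a)
    (hb : l ≤ b) (hd : |d| ≤ A) (hlip : |a - b| ≤ A * |h|)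
    (htaylor : |a - b - d * h| ≤ B * h ^ 2) :
    |1 / a - 1 / b - (-(d / b ^ 2)) * h| ≤ (B / l ^ 2 + A ^ 2 / l ^ 3) * h ^ 2 := by
  have ha0 := hl.trans_le ha
  have hb0 := hl.trans_le hb
  have hid : 1 / a - 1 / b - (-(d / b ^ 2)) * h
      = -((a - b - d * h) / (a * b)) + d * h * (a - b) / (a * b ^ 2) := by
    field_simp
    ring
  have h1 : |(a - b - d * h) / (a * b)| ≤ B * h ^ 2 / l ^ 2 := by
    rw [abs_div, abs_of_pos (mul_pos ha0 hb0), sq l]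
    exact div_le_div₀ ((abs_nonneg _).trans htaylor) htaylor (by positivity)
      (mul_le_mul ha hb hl.le ha0.le)
  have h2 : |d * h * (a - b) / (a * b ^ 2)| ≤ A ^ 2 * h ^ 2 / l ^ 3 := by
    have hA : 0 ≤ A := (abs_nonneg d).trans hd
    have hnum : |d * h * (a - b)| ≤ A ^ 2 * h ^ 2 := by
      rw [abs_mul, abs_mul, ← sq_abs h]
      calc |d| * |h| * |a - b| ≤ (A * |h|) * (A * |h|) :=
            mul_le_mul (mul_le_mul_of_nonneg_right hd (abs_nonneg h)) hlip (abs_nonneg _)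
              (by positivity)
        _ = A ^ 2 * |h| ^ 2 := by ring
    rw [abs_div, abs_of_pos (by positivity : 0 < a * b ^ 2), pow_succ' l 2]
    exact div_le_div₀ (by positivity) hnum (by positivity)
      (mul_le_mul ha (pow_le_pow_left₀ hl.le hb 2) (by positivity) ha0.le)
  calc |1 / a - 1 / b - (-(d / b ^ 2)) * h|
      ≤ |(a - b - d * h) / (a * b)| + |d * h * (a - b) / (a * b ^ 2)| := by
        rw [hid, ← abs_neg ((a - b - d * h) / (a * b))]; exact abs_add_le _ _
    _ ≤ B * h ^ 2 / l ^ 2 + A ^ 2 * h ^ 2 / l ^ 3 := add_le_add h1 h2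
    _ = (B / l ^ 2 + A ^ 2 / l ^ 3) * h ^ 2 := by ring

lemma abs_integral_window_sub_le {g : ℝ → ℝ} (hg : ContDiff ℝ 2 g) {B : ℝ}
    (hB : ∀ t, |deriv (deriv g) t| ≤ B) {x α : ℝ} (hα : 0 ≤ α) :
    |(∫ v in (x - α)..(x + α), g v) - 2 * α * g x| ≤ 2 * B * α ^ 3 :=
  abs_integral_sub_two_mul_le hα ((abs_nonneg _).trans (hB 0))
    (hg.continuous.intervalIntegrable _ _) fun v _ =>
      abs_sub_sub_deriv_mul_le (hg.differentiable two_ne_zero) hg.differentiable_deriv_two hB x v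

lemma abs_integral_inv_primitive_sub_le {g : ℝ → ℝ} {l B u α : ℝ} (hg : ContDiff ℝ 2 g)
    (hl : 0 < l) (hB : ∀ t, |deriv (deriv g) t| ≤ B) (hα : 0 < α)
    (hlow : ∀ t ∈ Icc (u - 2 * α) (u + 2 * α), l ≤ g t) :
    |(∫ x in (u - α)..(u + α),
        1 / ((∫ v in (0:ℝ)..(x + α), g v) - ∫ v in (0:ℝ)..(x - α), g v)) -
      ∫ x in (u - α)..(u + α), 1 / (2 * α * g x)| ≤ B / l ^ 2 * α ^ 2 := by
  have hgi : ∀ a b, IntervalIntegrable g volume a b :=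
    hg.continuous.intervalIntegrable
  have hwindow : ∀ x, (∫ v in (0:ℝ)..(x + α), g v) - (∫ v in (0:ℝ)..(x - α), g v) =
      ∫ v in (x - α)..(x + α), g v := fun x => integral_interval_sub_left (hgi _ _) (hgi _ _)
  have hprim := continuous_primitive hgi 0
  have hgc := hg.continuous
  have hlow_window :
      ∀ x ∈ Icc (u - α) (u + α), 2 * α * l ≤ ∫ v in (x - α)..(x + α), g v :=
    fun x hx => by
      have := integral_mono_on (a := x - α) (b := x + α) (by linarith)
        intervalIntegrable_const (hgi _ _)
        fun v hv => hlow v ⟨by linarith [hx.1, hv.1], by linarith [hx.2, hv.2]⟩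
      rwa [integral_const, smul_eq_mul, show x + α - (x - α) = 2 * α by ring] at this
  have key := abs_integral_inv_sub_integral_inv_le (by linarith) (by positivity : 0 < 2 * α * l)
    (D := fun x => (∫ v in (0:ℝ)..(x + α), g v) - ∫ v in (0:ℝ)..(x - α), g v)
    (E := fun x => 2 * α * g x) (ε := 2 * B * α ^ 3)
    (by fun_prop) (by fun_prop)
    (fun x hx => (hwindow x).symm ▸ hlow_window x hx)
    (fun x hx => mul_le_mul_of_nonneg_left (hlow x ⟨by linarith [hx.1], by linarith [hx.2]⟩)
      (by positivity))
    (fun x _ => (hwindow x).symm ▸ abs_integral_window_sub_le hg hB hα.le)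
  calc _ ≤ _ := key
    _ = B / l ^ 2 * α ^ 2 := by field_simp; ring

lemma abs_integral_inv_mul_sub_inv_le {g : ℝ → ℝ} {l A B u α : ℝ} (hg : ContDiff ℝ 2 g)
    (hl : 0 < l) (hB : ∀ t, |deriv (deriv g) t| ≤ B) (hα : 0 < α)
    (hlow : ∀ t ∈ Icc (u - α) (u + α), l ≤ g t)
    (hA : ∀ t ∈ Icc (u - α) (u + α), |deriv g t| ≤ A) :
    |(∫ x in (u - α)..(u + α), 1 / (2 * α * g x)) - 1 / g u| ≤
      (B / l ^ 2 + A ^ 2 / l ^ 3) * α ^ 2 := by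
  have hu : u ∈ Icc (u - α) (u + α) := ⟨by linarith, by linarith⟩
  have hgd := hg.differentiable two_ne_zero
  have hlip : ∀ x ∈ Icc (u - α) (u + α), |g x - g u| ≤ A * |x - u| := fun x hx => by
    simpa only [Real.norm_eq_abs] using (convex_Icc _ _).norm_image_sub_le_of_norm_deriv_le
      (fun t _ => hgd t) hA hu hx
  have hint : IntervalIntegrable (fun x => 1 / g x) volume (u - α) (u + α) :=
    ((continuousOn_const.div hg.continuous.continuousOn fun x hx =>
      (hl.trans_le (hlow x hx)).ne').mono (uIcc_of_le (by linarith)).subset).intervalIntegrable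
  have key := abs_integral_sub_two_mul_le hα.le
    (add_nonneg (div_nonneg ((abs_nonneg _).trans (hB 0)) (by positivity)) (by positivity)) hint
    (d := -(deriv g u / g u ^ 2)) fun x hx =>
      abs_one_div_sub_one_div_sub_mul_le hl (hlow x hx) (hlow u hu) (hA u hu) (hlip x hx)
        (abs_sub_sub_deriv_mul_le hgd hg.differentiable_deriv_two hB u x)
  have hmean : ∫ x in (u - α)..(u + α), 1 / (2 * α * g x) =
      (∫ x in (u - α)..(u + α), 1 / g x) / (2 * α) := by
    rw [← integral_div]
    exact integral_congr fun x _ => by field_simp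
  rw [hmean, div_sub' (by positivity), abs_div, abs_of_pos (by positivity : 0 < 2 * α),
    div_le_iff₀ (by positivity)]
  calc _ ≤ _ := key
    _ = _ := by ring

/-- For `g` of class `C²`, bounded below by `l > 0` on a neighborhood of
`[0,1]`, with `|g''| ≤ B`, and `G(x) = ∫₀^x g`, we have uniformly for `u ∈ [α, 1−α]`
`∫_{u−α}^{u+α} dx/(G(x+α)−G(x−α)) = 1/g(u) + O(α²)`. -/
theorem stmt_11 (g : ℝ → ℝ) (l B : ℝ) (hl : 0 < l)
    (hg : ContDiff ℝ 2 g)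
    (hlow : ∀ t ∈ Icc (-1 : ℝ) 2, l ≤ g t)
    (hB : ∀ t, |deriv (deriv g) t| ≤ B) :
    ∃ C > 0, ∃ α₀ > 0, ∀ α : ℝ, 0 < α → α ≤ α₀ → ∀ u ∈ Icc α (1 - α),
      |(∫ x in (u - α)..(u + α),
          1 / ((∫ v in (0:ℝ)..(x + α), g v) - ∫ v in (0:ℝ)..(x - α), g v)) - 1 / g u|
        ≤ C * α ^ 2 := by
  obtain ⟨A, hA⟩ := isCompact_Icc.exists_bound_of_continuousOn
    (hg.continuous_deriv one_le_two).continuousOn (s := Icc (-1 : ℝ) 2)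
  have hB0 : 0 ≤ B / l ^ 2 := div_nonneg ((abs_nonneg _).trans (hB 0)) (sq_nonneg l)
  have hA0 : 0 ≤ A ^ 2 / l ^ 3 := by positivity
  refine ⟨2 * (B / l ^ 2) + A ^ 2 / l ^ 3 + 1, by linarith, 1, one_pos,
    fun α hα hα1 u hu => ?_⟩
  have hwide : Icc (u - 2 * α) (u + 2 * α) ⊆ Icc (-1 : ℝ) 2 :=
    Icc_subset_Icc (by linarith [hu.1]) (by linarith [hu.2])
  have hnarrow : Icc (u - α) (u + α) ⊆ Icc (-1 : ℝ) 2 :=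
    (Icc_subset_Icc (by linarith) (by linarith)).trans hwide
  have h1 := abs_integral_inv_primitive_sub_le hg hl hB hα fun t ht => hlow t (hwide ht)
  have h2 := abs_integral_inv_mul_sub_inv_le hg hl hB hα (fun t ht => hlow t (hnarrow ht))
    fun t ht => hA t (hnarrow ht)
  calc _ ≤ _ := abs_sub_le _ (∫ x in (u - α)..(u + α), 1 / (2 * α * g x)) _
    _ ≤ B / l ^ 2 * α ^ 2 + (B / l ^ 2 + A ^ 2 / l ^ 3) * α ^ 2 := add_le_add h1 h2
    _ ≤ _ := by nlinarith [sq_nonneg α]
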